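/- In the n-dimensional army-of-one unaimed system, if the conserved quantity K = x₁X₁(0) - (n-1)·∑_{i=2}^n xᵢXᵢ(0) is positive and all initial data are positive, then every Xⱼ(t) with j ≥ 2 tends to 0 as t → +∞, and X₁(t) converges to a strictly positive limit. -/

import Mathlib

/-!
Put `c = x₁ / (n - 1)` and `Z = ∑_{i ≥ 2} xᵢ Xᵢ`. Then `(X₁, Z)` solves the planar system
`X₁' = -Z X₁`, `Z' = -c X₁ Z`, which conserves `c X₁ - Z = K / (n - 1) =: q > 0`.
Each `Xⱼ` solves a linear equation, so it stays nonnegative; hence so does `Z`, and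
`c X₁ ≥ q`. Then `Z' ≤ -q Z`, so `Z ≤ Z(0) e^{-q t} → 0`, which forces every `Xⱼ → 0`
and `X₁ = (q + Z) / c → q / c > 0`.
-/

open Filter Topology Set Real

theorem eq_of_hasDerivAt_zero_of_nonneg {f : ℝ → ℝ}
    (hf : ∀ t, 0 ≤ t → HasDerivAt f 0 t) {t : ℝ} (ht : 0 ≤ t) : f t = f 0 :=
  constant_of_has_deriv_right_zero
    (fun s hs => (hf s hs.1).continuousAt.continuousWithinAt)
    (fun s hs => (hf s hs.1).hasDerivWithinAt) t ⟨ht, le_rfl⟩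

theorem eq_mul_exp_integral_of_hasDerivAt_mul {f a : ℝ → ℝ} (ha : ContinuousOn a (Ici 0))
    (hf : ∀ t, 0 ≤ t → HasDerivAt f (a t * f t) t) {t : ℝ} (ht : 0 ≤ t) :
    f t = f 0 * exp (∫ s in (0 : ℝ)..t, a s) := by
  -- Extending `a` continuously to the left makes its primitive differentiable everywhere.
  set b : ℝ → ℝ := fun s => a (max s 0)
  have hb : Continuous b :=
    ha.comp_continuous (continuous_id.max continuous_const) fun s => le_max_right s 0
  have hba : ∀ s, 0 ≤ s → b s = a s := fun s hs => congrArg a (max_eq_left hs)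
  set F : ℝ → ℝ := fun t => ∫ s in (0 : ℝ)..t, b s
  have hF : ∀ t, HasDerivAt F (b t) t := fun t =>
    intervalIntegral.integral_hasDerivAt_right (hb.intervalIntegrable _ _)
      (hb.stronglyMeasurableAtFilter _ _) hb.continuousAt
  have hconst : f t * exp (-F t) = f 0 := by
    have h := eq_of_hasDerivAt_zero_of_nonneg (f := fun t => f t * exp (-F t)) (fun s hs =>
      ((hf s hs).mul (hF s).neg.exp).congr_deriv (by rw [hba s hs]; ring)) ht
    simpa [F] using h
  have hFa : F t = ∫ s in (0 : ℝ)..t, a s :=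
    intervalIntegral.integral_congr fun s hs => hba s (uIcc_of_le ht ▸ hs).1
  rw [← hFa, ← hconst, mul_assoc, ← exp_add, neg_add_cancel, exp_zero, mul_one]

theorem nonneg_of_hasDerivAt_mul {f a : ℝ → ℝ} (ha : ContinuousOn a (Ici 0))
    (hf : ∀ t, 0 ≤ t → HasDerivAt f (a t * f t) t) (hf0 : 0 ≤ f 0) {t : ℝ} (ht : 0 ≤ t) :
    0 ≤ f t := by
  rw [eq_mul_exp_integral_of_hasDerivAt_mul ha hf ht]
  positivity

theorem le_mul_exp_of_hasDerivAt_mul {f a : ℝ → ℝ} {b : ℝ} (ha : ContinuousOn a (Ici 0))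
    (hab : ∀ t, 0 ≤ t → a t ≤ b) (hf : ∀ t, 0 ≤ t → HasDerivAt f (a t * f t) t)
    (hf0 : 0 ≤ f 0) {t : ℝ} (ht : 0 ≤ t) : f t ≤ f 0 * exp (b * t) := by
  rw [eq_mul_exp_integral_of_hasDerivAt_mul ha hf ht]
  gcongr
  calc ∫ s in (0 : ℝ)..t, a s
      ≤ ∫ _ in (0 : ℝ)..t, b :=
        intervalIntegral.integral_mono_on ht
          ((ha.mono Icc_subset_Ici_self).intervalIntegrable_of_Icc ht)
          intervalIntegrable_const fun s hs => hab s hs.1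
    _ = b * t := by simp [mul_comm]

theorem lanchester_unaimed_tendsto {u v : ℝ → ℝ} {c : ℝ} (hc : 0 < c)
    (hu : ∀ t, 0 ≤ t → HasDerivAt u (-v t * u t) t)
    (hv : ∀ t, 0 ≤ t → HasDerivAt v (-c * u t * v t) t)
    (hv0 : 0 ≤ v 0) (hK : v 0 < c * u 0) :
    Tendsto v atTop (𝓝 0) ∧ Tendsto u atTop (𝓝 ((c * u 0 - v 0) / c)) := by
  set q := c * u 0 - v 0
  have hq : 0 < q := sub_pos.2 hK
  have ha : ContinuousOn (fun t => -c * u t) (Ici 0) :=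
    continuousOn_const.mul (continuousOn_of_forall_continuousAt fun t ht => (hu t ht).continuousAt)
  have hv_nonneg : ∀ t, 0 ≤ t → 0 ≤ v t := fun t ht => nonneg_of_hasDerivAt_mul ha hv hv0 ht
  have hcons : ∀ t, 0 ≤ t → c * u t - v t = q := fun t ht =>
    eq_of_hasDerivAt_zero_of_nonneg (f := fun t => c * u t - v t)
      (fun s hs => (((hu s hs).const_mul c).sub (hv s hs)).congr_deriv (by ring)) ht
  have hv_le : ∀ t, 0 ≤ t → v t ≤ v 0 * exp (-q * t) := fun t ht =>
    le_mul_exp_of_hasDerivAt_mul ha (fun s hs => by linarith [hcons s hs, hv_nonneg s hs]) hv hv0 ht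
  have hv_lim : Tendsto v atTop (𝓝 0) := by
    have hexp : Tendsto (fun t => v 0 * exp (-q * t)) atTop (𝓝 0) := by
      simpa using (tendsto_exp_atBot.comp
        (tendsto_id.const_mul_atTop_of_neg (neg_neg_of_pos hq))).const_mul (v 0)
    refine tendsto_of_tendsto_of_tendsto_of_le_of_le' tendsto_const_nhds hexp ?_ ?_ <;>
      filter_upwards [eventually_ge_atTop 0] with t ht
    exacts [hv_nonneg t ht, hv_le t ht]
  refine ⟨hv_lim, ?_⟩
  have hu_eq : ∀ t, 0 ≤ t → (q + v t) / c = u t := fun t ht => by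
    rw [div_eq_iff hc.ne']; linarith [hcons t ht]
  simpa using ((hv_lim.const_add q).div_const c).congr'
    ((eventually_ge_atTop 0).mono hu_eq)

theorem tendsto_zero_of_sum_tendsto_zero {ι α : Type*} {l : Filter α} {s : Finset ι}
    {g : ι → α → ℝ} (hg : ∀ i ∈ s, ∀ᶠ a in l, 0 ≤ g i a)
    (h : Tendsto (fun a => ∑ i ∈ s, g i a) l (𝓝 0)) {j : ι} (hj : j ∈ s) :
    Tendsto (g j) l (𝓝 0) := by
  refine tendsto_of_tendsto_of_tendsto_of_le_of_le' tendsto_const_nhds h (hg j hj) ?_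
  filter_upwards [(Finset.eventually_all s).2 hg] with a ha
  exact Finset.single_le_sum ha hj

theorem lanchester_army_of_one_X1_wins (n : ℕ) (hn : 2 ≤ n)
    (x : ℕ → ℝ) (X : ℕ → ℝ → ℝ)
    (hx : ∀ i, 1 ≤ i → i ≤ n → 0 < x i)
    (hX0 : ∀ i, 1 ≤ i → i ≤ n → 0 < X i 0)
    (hX₁ : ∀ t : ℝ, 0 ≤ t → HasDerivAt (X 1)
      ((-(∑ i ∈ Finset.Icc 2 n, x i * X i t)) * X 1 t) t)
    (hXj : ∀ j, 2 ≤ j → j ≤ n → ∀ t : ℝ, 0 ≤ t →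
      HasDerivAt (X j) (-(x 1 / ((n : ℝ) - 1)) * X 1 t * X j t) t)
    (hK : 0 < x 1 * X 1 0 - ((n : ℝ) - 1) * ∑ i ∈ Finset.Icc 2 n, x i * X i 0) :
    (∀ j, 2 ≤ j → j ≤ n → Tendsto (X j) atTop (𝓝 0)) ∧
    ∃ L : ℝ, 0 < L ∧ Tendsto (X 1) atTop (𝓝 L) := by
  set c := x 1 / ((n : ℝ) - 1)
  set Z : ℝ → ℝ := fun t => ∑ i ∈ Finset.Icc 2 n, x i * X i t
  have hn1 : (0 : ℝ) < n - 1 := by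
    have : (2 : ℝ) ≤ n := by exact_mod_cast hn
    linarith
  have hc : 0 < c := div_pos (hx 1 le_rfl (by omega)) hn1
  have hXj_nonneg : ∀ j, 2 ≤ j → j ≤ n → ∀ t, 0 ≤ t → 0 ≤ X j t := fun j hj hjn t ht =>
    nonneg_of_hasDerivAt_mul (a := fun t => -c * X 1 t)
      (continuousOn_const.mul
        (continuousOn_of_forall_continuousAt fun s hs => (hX₁ s hs).continuousAt))
      (fun s hs => (hXj j hj hjn s hs).congr_deriv (by ring)) (hX0 j (by omega) hjn).le ht
  have hxX_nonneg : ∀ i ∈ Finset.Icc 2 n, ∀ t, 0 ≤ t → 0 ≤ x i * X i t := fun i hi t ht => by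
    obtain ⟨hi, hin⟩ := Finset.mem_Icc.1 hi
    exact mul_nonneg (hx i (by omega) hin).le (hXj_nonneg i hi hin t ht)
  have hZ : ∀ t, 0 ≤ t → HasDerivAt Z (-c * X 1 t * Z t) t := fun t ht => by
    refine (HasDerivAt.fun_sum fun i hi =>
      (hXj i (Finset.mem_Icc.1 hi).1 (Finset.mem_Icc.1 hi).2 t ht).const_mul (x i)).congr_deriv ?_
    simp only [Z, Finset.mul_sum]
    exact Finset.sum_congr rfl fun i _ => by ring
  have hK' : Z 0 < c * X 1 0 := by
    rw [div_mul_eq_mul_div, lt_div_iff₀ hn1]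
    linarith
  obtain ⟨hZ_lim, hX₁_lim⟩ := lanchester_unaimed_tendsto hc hX₁ hZ
    (Finset.sum_nonneg fun i hi => hxX_nonneg i hi 0 le_rfl) hK'
  refine ⟨fun j hj hjn => ?_, _, div_pos (sub_pos.2 hK') hc, hX₁_lim⟩
  have hxj : x j ≠ 0 := (hx j (by omega) hjn).ne'
  have hxX_lim := tendsto_zero_of_sum_tendsto_zero (g := fun i t => x i * X i t)
    (fun i hi => (eventually_ge_atTop 0).mono (hxX_nonneg i hi)) hZ_lim
    (Finset.mem_Icc.2 ⟨hj, hjn⟩)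
  simpa [hxj] using hxX_lim.const_mul (x j)⁻¹
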